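/- Let $A \in \mathbb{C}^{m\times n}$ and suppose $A P = Q R$ where $P \in \mathbb{C}^{n\times n}$ is a permutation matrix, $Q = [Q_1\ Q_2] \in \mathbb{C}^{m\times m}$ is unitary with $Q_1 \in \mathbb{C}^{m\times k}$, and $R = \begin{pmatrix} R_{11} & R_{12} \\ 0 & R_{22} \end{pmatrix} \in \mathbb{C}^{m\times n}$ is upper triangular with $R_{11} \in \mathbb{C}^{k\times k}$ invertible. Set $C = Q_1 R_{11}$, which has full column rank, and $C^+ = (C^* C)^{-1} C^*$. Then $\|(I_m - C C^+) A\|_F \le \|R_{22}\|_F$. -/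

import Mathlib

open scoped BigOperators
open Matrix

/-- Squared Frobenius norm of a complex matrix. -/
noncomputable def frobSq {m n : Type*} [Fintype m] [Fintype n] (M : Matrix m n ℂ) : ℝ :=
  ∑ i, ∑ j, ‖M i j‖ ^ 2

/-- Frobenius norm of a complex matrix. -/
noncomputable def frobNorm {m n : Type*} [Fintype m] [Fintype n] (M : Matrix m n ℂ) : ℝ :=
  Real.sqrt (frobSq M)

/-!
Since `R₁₁` is invertible, `C = Q₁ R₁₁` has the same column space as `Q₁`, so `C C⁺ = Q₁ Q₁ᴴ`.
As `Q` is unitary, `(I - Q₁ Q₁ᴴ) Q = Q D` with `D` the diagonal matrix that zeroes the first `k`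
coordinates, hence `(I - C C⁺) A P = Q (D R)`. The Frobenius norm ignores the unitary factor `Q`
and the permutation `P`, and by upper triangularity the only nonzero block of `D R` is `R₂₂`; so
the bound even holds with equality.
-/

open Matrix Finset Function

section Frobenius

variable {m n : Type*} [Fintype m] [Fintype n]

lemma frobSq_eq_re_trace (M : Matrix m n ℂ) : frobSq M = (Mᴴ * M).trace.re := by
  rw [frobSq, trace, Complex.re_sum, Finset.sum_comm]
  refine Finset.sum_congr rfl fun j _ => ?_
  simp only [Matrix.diag_apply, mul_apply, conjTranspose_apply, Complex.re_sum]
  refine Finset.sum_congr rfl fun i _ => ?_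
  rw [Complex.star_def, mul_comm, Complex.mul_conj, Complex.normSq_eq_norm_sq, Complex.ofReal_re]

lemma frobSq_unitary_mul [DecidableEq m] {U : Matrix m m ℂ} (hU : Uᴴ * U = 1)
    (M : Matrix m n ℂ) : frobSq (U * M) = frobSq M := by
  rw [frobSq_eq_re_trace, frobSq_eq_re_trace, conjTranspose_mul, Matrix.mul_assoc,
    ← Matrix.mul_assoc Uᴴ, hU, Matrix.one_mul]

lemma frobSq_mul_unitary [DecidableEq n] {U : Matrix n n ℂ} (hU : U * Uᴴ = 1)
    (M : Matrix m n ℂ) : frobSq (M * U) = frobSq M := by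
  rw [frobSq_eq_re_trace, frobSq_eq_re_trace, conjTranspose_mul, trace_mul_comm,
    Matrix.mul_assoc, ← Matrix.mul_assoc U, hU, Matrix.one_mul, trace_mul_comm]

lemma frobSq_submatrix_of_support {m' n' : Type*} [Fintype m'] [Fintype n'] (M : Matrix m n ℂ)
    {g : m' → m} {h : n' → n} (hg : Injective g) (hh : Injective h)
    (hM : ∀ i j, i ∉ Set.range g ∨ j ∉ Set.range h → M i j = 0) :
    frobSq (M.submatrix g h) = frobSq M := by
  refine Fintype.sum_of_injective g hg _ _ (fun i hi => ?_) (fun i => ?_)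
  · simp [hM i _ (Or.inl hi)]
  · refine Fintype.sum_of_injective h hh _ _ (fun j hj => ?_) (fun j => rfl)
    simp [hM _ j (Or.inr hj)]

end Frobenius

section Projection

variable {α : Type*} [CommRing α] {m k ι : Type*} [Fintype k] [Fintype ι] [DecidableEq ι]

lemma submatrix_id_mul_one_submatrix (M : Matrix m ι α) (f : k ↪ ι) :
    M.submatrix id f * (1 : Matrix ι ι α).submatrix f id =
      M * diagonal (fun l => if l ∈ univ.map f then (1 : α) else 0) := by
  refine Matrix.ext fun i l => ?_
  rw [mul_diagonal, mul_apply]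
  by_cases hl : l ∈ univ.map f
  · obtain ⟨a, -, rfl⟩ := Finset.mem_map.mp hl
    rw [if_pos hl, mul_one]
    refine (Fintype.sum_eq_single a fun j hj => ?_).trans ?_
    · simp [one_apply, f.injective.ne hj]
    · change M i (f a) * (1 : Matrix ι ι α) (f a) (f a) = M i (f a)
      rw [one_apply_eq, mul_one]
  · simp_all [one_apply]

variable [StarRing α]

lemma mul_pinv_eq_of_orthonormal_mul_isUnit [Fintype m] [DecidableEq k] {Q₁ : Matrix m k α}
    (hQ₁ : Q₁ᴴ * Q₁ = 1) {R : Matrix k k α} (hR : IsUnit R) :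
    Q₁ * R * (((Q₁ * R)ᴴ * (Q₁ * R))⁻¹ * (Q₁ * R)ᴴ) = Q₁ * Q₁ᴴ := by
  have hRdet : IsUnit R.det := (isUnit_iff_isUnit_det R).mp hR
  have hRHdet : IsUnit Rᴴ.det := (isUnit_iff_isUnit_det _).mp hR.star
  have hgram : (Q₁ * R)ᴴ * (Q₁ * R) = Rᴴ * R := by
    rw [conjTranspose_mul, Matrix.mul_assoc, ← Matrix.mul_assoc Q₁ᴴ, hQ₁, Matrix.one_mul]
  calc Q₁ * R * (((Q₁ * R)ᴴ * (Q₁ * R))⁻¹ * (Q₁ * R)ᴴ)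
      = Q₁ * ((R * R⁻¹) * ((Rᴴ⁻¹ * Rᴴ) * Q₁ᴴ)) := by
        rw [hgram, Matrix.mul_inv_rev, conjTranspose_mul]
        simp only [Matrix.mul_assoc]
    _ = Q₁ * Q₁ᴴ := by
        rw [mul_nonsing_inv _ hRdet, nonsing_inv_mul _ hRHdet, Matrix.one_mul, Matrix.one_mul]

omit [Fintype k] in
lemma conjTranspose_submatrix_mul_submatrix_of_unitary [DecidableEq k] {Q : Matrix ι ι α}
    (hQ : Qᴴ * Q = 1) (f : k ↪ ι) : (Q.submatrix id f)ᴴ * Q.submatrix id f = 1 := by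
  rw [conjTranspose_submatrix, ← submatrix_mul _ _ _ _ _ bijective_id, hQ, submatrix_one_embedding]

lemma one_sub_mul_conjTranspose_mul_unitary {Q : Matrix ι ι α} (hQ : Qᴴ * Q = 1) (f : k ↪ ι) :
    (1 - Q.submatrix id f * (Q.submatrix id f)ᴴ) * Q =
      Q * diagonal (fun l => if l ∈ univ.map f then (0 : α) else 1) := by
  have hcoord : (Q.submatrix id f)ᴴ * Q = (1 : Matrix ι ι α).submatrix f id := by
    rw [← hQ]; rfl
  rw [Matrix.sub_mul, Matrix.one_mul, Matrix.mul_assoc, hcoord, submatrix_id_mul_one_submatrix]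
  conv_lhs => enter [1]; rw [← Matrix.mul_one Q]
  rw [← Matrix.mul_sub, ← diagonal_one, diagonal_sub]
  congr 2
  ext l
  split_ifs <;> simp

lemma permMatrix_mul_conjTranspose_permMatrix {n : Type*} [DecidableEq n] [Fintype n]
    (σ : Equiv.Perm n) : σ.permMatrix α * (σ.permMatrix α)ᴴ = 1 := by
  rw [conjTranspose_permMatrix, ← permMatrix_mul, inv_mul_cancel, permMatrix_one]

end Projection

section PivotedQR

variable {α : Type*} [Semiring α] {m n k : ℕ}

lemma Fin.mem_map_castLEEmb_univ (h : k ≤ m) (l : Fin m) :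
    l ∈ univ.map (Fin.castLEEmb h) ↔ (l : ℕ) < k := by
  rw [← Finset.mem_coe, Finset.coe_map, coe_univ, Set.image_univ, Fin.coe_castLEEmb,
    Fin.range_castLE]
  rfl

lemma diagonal_ite_lt_mul_apply_eq_zero {R : Matrix (Fin m) (Fin n) α}
    (hR : ∀ (i : Fin m) (j : Fin n), (j : ℕ) < i → R i j = 0) {l : Fin m} {j : Fin n}
    (hlj : (l : ℕ) < k ∨ (j : ℕ) < k) :
    (diagonal (fun l : Fin m => if (l : ℕ) < k then (0 : α) else 1) * R) l j = 0 := by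
  rw [diagonal_mul]
  split_ifs with hl
  · exact zero_mul _
  · rw [hR l j (by omega), mul_zero]

end PivotedQR

/-- Given a pivoted QR factorization `A P = Q R` with `Q = [Q₁ Q₂]` unitary,
`R = [[R₁₁, R₁₂], [0, R₂₂]]` upper triangular with `R₁₁` invertible, and
`C = Q₁ R₁₁` (full column rank, `C⁺ = (C^*C)⁻¹C^*`), one has
`‖(I - C C⁺) A‖_F ≤ ‖R₂₂‖_F`. -/
theorem pivoted_qr_column_projection_bound {m n k : ℕ} (hkm : k ≤ m)
    (A : Matrix (Fin m) (Fin n) ℂ)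
    (P : Matrix (Fin n) (Fin n) ℂ)
    (hP : ∃ e : Equiv.Perm (Fin n), P = e.permMatrix ℂ)
    (Q : Matrix (Fin m) (Fin m) ℂ)
    (hQ : Qᴴ * Q = 1)
    (R : Matrix (Fin m) (Fin n) ℂ)
    (hR : ∀ (i : Fin m) (j : Fin n), (j : ℕ) < (i : ℕ) → R i j = 0)
    (hQR : A * P = Q * R)
    (Q1 : Matrix (Fin m) (Fin k) ℂ)
    (hQ1 : ∀ (i : Fin m) (j : Fin k), Q1 i j = Q i (Fin.castLE hkm j))
    (R11 : Matrix (Fin k) (Fin k) ℂ)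
    (R22 : Matrix (Fin (m - k)) (Fin (n - k)) ℂ)
    (hR22 : ∀ (i : Fin (m - k)) (j : Fin (n - k)),
      R22 i j = R ⟨k + (i : ℕ), by omega⟩ ⟨k + (j : ℕ), by omega⟩)
    (hR11inv : IsUnit R11)
    (C : Matrix (Fin m) (Fin k) ℂ) (hC : C = Q1 * R11) :
    frobNorm ((1 - C * ((Cᴴ * C)⁻¹ * Cᴴ)) * A) ≤ frobNorm R22 := by
  obtain ⟨e, rfl⟩ := hP
  have hQ₁ : Q1 = Q.submatrix id (Fin.castLEEmb hkm) := Matrix.ext hQ1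
  set R' := diagonal (fun l : Fin m => if (l : ℕ) < k then (0 : ℂ) else 1) * R
  have hresidual : (1 - C * ((Cᴴ * C)⁻¹ * Cᴴ)) * A * e.permMatrix ℂ = Q * R' := by
    rw [hC, hQ₁, mul_pinv_eq_of_orthonormal_mul_isUnit
      (conjTranspose_submatrix_mul_submatrix_of_unitary hQ _) hR11inv, Matrix.mul_assoc, hQR,
      ← Matrix.mul_assoc, one_sub_mul_conjTranspose_mul_unitary hQ]
    simp only [Fin.mem_map_castLEEmb_univ, Matrix.mul_assoc, R']
  have hR22_eq : R22 = R'.submatrix (Fin.natAdd_castLEEmb (Nat.sub_le m k))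
      (Fin.natAdd_castLEEmb (Nat.sub_le n k)) := by
    refine Matrix.ext fun i j => ?_
    simp only [hR22, R', submatrix_apply, diagonal_mul]
    rw [if_neg (by simp; omega), one_mul]
    congr 1 <;> ext <;> simp <;> omega
  suffices frobSq ((1 - C * ((Cᴴ * C)⁻¹ * Cᴴ)) * A) = frobSq R22 from
    (congrArg Real.sqrt this).le
  rw [← frobSq_mul_unitary (permMatrix_mul_conjTranspose_permMatrix e), hresidual,
    frobSq_unitary_mul hQ, hR22_eq, frobSq_submatrix_of_support _ (Fin.natAdd_castLEEmb _).injective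
      (Fin.natAdd_castLEEmb _).injective fun l j hlj => ?_]
  simp only [Fin.range_natAdd_castLEEmb, Set.mem_ofPred_eq] at hlj
  exact diagonal_ite_lt_mul_apply_eq_zero hR (by omega)
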